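/- Monotonicity of scenario-grouping bounds in refinement: if the partition P' of the scenario set Ω refines the partition P (every group of P' is contained in a group of P), then the grouping lower bound associated with P is at least the grouping lower bound associated with P', i.e., coarser partitions give tighter (larger) lower bounds. Formally, Σ_{g∈P} W_g z_g ≥ Σ_{g'∈P'} W_{g'} z_{g'}. -/
import Mathlib


open Finset

/-- Monotonicity of scenario-grouping bounds in refinement: if the partition `P'` refines
the partition `P` of the scenario set `Omega` (every group of `P'` is contained in a group
of `P`), the subproblem feasible sets are antitone in the group (`S' ⊆ S → X S ⊆ X S'`),
and each group value `z S` is the attained minimum of the rescaled expected cost over `X S`,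
then the grouping lower bound of `P` is at least that of `P'`:
`∑_{S'∈P'} W_{S'} z_{S'} ≤ ∑_{S∈P} W_S z_S`. -/
theorem smg_refinement_monotone {α Ω : Type*} [DecidableEq Ω]
    (Omega : Finset Ω) (w : Ω → ℝ)
    (hw : ∀ ω ∈ Omega, 0 < w ω) (hw1 : ∑ ω ∈ Omega, w ω = 1)
    (f : Ω → α → ℝ)
    (X : Finset Ω → Set α)
    (hX : ∀ S S' : Finset Ω, S' ⊆ S → X S ⊆ X S')
    (z : Finset Ω → ℝ)
    (hz : ∀ S : Finset Ω, S.Nonempty → S ⊆ Omega →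
      IsLeast ((fun x => (∑ ω ∈ S, w ω)⁻¹ * ∑ ω ∈ S, w ω * f ω x) '' X S) (z S))
    (P P' : Finset (Finset Ω))
    (hPdisj : ∀ S ∈ P, ∀ S'' ∈ P, S ≠ S'' → Disjoint S S'')
    (hPcover : Omega = P.biUnion id) (hPne : ∀ S ∈ P, S.Nonempty)
    (hP'disj : ∀ S ∈ P', ∀ S'' ∈ P', S ≠ S'' → Disjoint S S'')
    (hP'cover : Omega = P'.biUnion id) (hP'ne : ∀ S ∈ P', S.Nonempty)
    (hrefine : ∀ S' ∈ P', ∃ S ∈ P, S' ⊆ S) :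
    ∑ S' ∈ P', (∑ ω ∈ S', w ω) * z S' ≤ ∑ S ∈ P, (∑ ω ∈ S, w ω) * z S := by
  classical
  have hPsub : ∀ S ∈ P, S ⊆ Omega := by
    intro S hS ω hω; rw [hPcover]; exact mem_biUnion.2 ⟨S, hS, hω⟩
  have hP'sub : ∀ S ∈ P', S ⊆ Omega := by
    intro S hS ω hω; rw [hP'cover]; exact mem_biUnion.2 ⟨S, hS, hω⟩
  have hWpos : ∀ S : Finset Ω, S.Nonempty → S ⊆ Omega → 0 < ∑ ω ∈ S, w ω := by
    intro S hne hsub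
    exact Finset.sum_pos (fun ω hω => hw ω (hsub hω)) hne
  set F : Finset Ω → Finset (Finset Ω) := fun S => P'.filter (fun S' => S' ⊆ S) with hF
  -- P' is the disjoint union of the fibers F S, S ∈ P
  have hP'eq : P' = P.biUnion F := by
    ext S'
    simp only [mem_biUnion, hF, mem_filter]
    constructor
    · intro h
      obtain ⟨S, hS, hsub⟩ := hrefine S' h
      exact ⟨S, hS, h, hsub⟩
    · rintro ⟨S, _, h, _⟩; exact h
  have hFdisj : ∀ S ∈ P, ∀ T ∈ P, S ≠ T → Disjoint (F S) (F T) := by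
    intro S hS T hT hne
    rw [Finset.disjoint_left]
    intro S' h1 h2
    rw [hF, mem_filter] at h1 h2
    have hd := hPdisj S hS T hT hne
    obtain ⟨ω, hω⟩ := hP'ne S' h1.1
    exact (Finset.disjoint_left.1 hd (h1.2 hω) (h2.2 hω))
  rw [hP'eq, Finset.sum_biUnion hFdisj]
  apply Finset.sum_le_sum
  intro S hS
  obtain ⟨y, hyX, hyz⟩ := (hz S (hPne S hS) (hPsub S hS)).1
  -- decompose S as disjoint union of its fibers
  have hSeq : S = (F S).biUnion id := by
    ext ω
    simp only [mem_biUnion, hF, mem_filter, id]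
    constructor
    · intro hω
      have hωO : ω ∈ Omega := hPsub S hS hω
      rw [hP'cover] at hωO
      obtain ⟨S', hS', hωS'⟩ := mem_biUnion.1 hωO
      obtain ⟨T, hT, hsub⟩ := hrefine S' hS'
      have : T = S := by
        by_contra hne
        exact Finset.disjoint_left.1 (hPdisj T hT S hS hne) (hsub hωS') hω
      exact ⟨S', ⟨hS', this ▸ hsub⟩, hωS'⟩
    · rintro ⟨S', ⟨_, hsub⟩, hω⟩; exact hsub hω
  have hWS : 0 < ∑ ω ∈ S, w ω := hWpos S (hPne S hS) (hPsub S hS)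
  -- value of the coarse group at its minimizer
  have hval : (∑ ω ∈ S, w ω) * z S = ∑ ω ∈ S, w ω * f ω (y) := by
    rw [← hyz]; simp only []; rw [← mul_assoc, mul_inv_cancel₀ (ne_of_gt hWS), one_mul]
  rw [hval]
  have hsplit : ∑ ω ∈ S, w ω * f ω (y)
      = ∑ S' ∈ F S, ∑ ω ∈ S', w ω * f ω (y) := by
    have hd : ∀ A ∈ F S, ∀ B ∈ F S, A ≠ B → Disjoint A B := by
      intro A hA B hB hne
      rw [hF, mem_filter] at hA hB
      exact hP'disj A hA.1 B hB.1 hne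
    conv_lhs => rw [hSeq]
    exact Finset.sum_biUnion hd
  rw [hsplit]
  apply Finset.sum_le_sum
  intro S' hS'
  rw [hF, mem_filter] at hS'
  obtain ⟨hS'P, hsub⟩ := hS'
  have hWS' : 0 < ∑ ω ∈ S', w ω := hWpos S' (hP'ne S' hS'P) (hP'sub S' hS'P)
  have hxS' : y ∈ X S' := hX S S' hsub hyX
  have hlb := (hz S' (hP'ne S' hS'P) (hP'sub S' hS'P)).2 ⟨y, hxS', rfl⟩
  calc (∑ ω ∈ S', w ω) * z S'
      ≤ (∑ ω ∈ S', w ω) * ((∑ ω ∈ S', w ω)⁻¹ * ∑ ω ∈ S', w ω * f ω (y)) :=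
        mul_le_mul_of_nonneg_left hlb (le_of_lt hWS')
    _ = ∑ ω ∈ S', w ω * f ω (y) := by
        rw [← mul_assoc, mul_inv_cancel₀ (ne_of_gt hWS'), one_mul]
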